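/- Let (X,f) be a dynamical system, let n ≥ 1 be an integer and let ε > 0. Then there exists γ > 0, depending only on ε, n, f, such that every set S ⊆ X which is distributionally ε-scrambled for the map fⁿ is distributionally γ-scrambled for f. -/

import Mathlib

/-!
A time `q` of the `fⁿ`-orbit starts the block `[nq, nq + n)` of `f`-times. On the compact
space `X` the maps `f⁰, …, fⁿ` are uniformly equicontinuous. Hence `δ`-closeness at time `q`
for `fⁿ` makes the `f`-orbits `t`-close on the whole block, so the upper density of `t`-close
`f`-times is at least that of `δ`-close `fⁿ`-times, which is `1`. Conversely `γ`-closeness at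
any time of the block forces `ε`-closeness at the next `fⁿ`-time `n(q + 1)`, so the lower density
of `γ`-close `f`-times is at most twice that of `ε`-close `fⁿ`-times, which is `0`.
-/

open Filter Set

noncomputable section
open scoped Classical

/-- Fraction of times `0 ≤ i < k` at which the `g`-orbits of `x` and `y` are `t`-close,
i.e. `Φ⁽ᵏ⁾_{xy}(t; g)`. -/
def distCount {X : Type*} [MetricSpace X] (g : X → X) (x y : X) (t : ℝ) (k : ℕ) : ℝ :=
  (((Finset.range k).filter fun i => dist (g^[i] x) (g^[i] y) < t).card : ℝ) / k

/-- `Φ_{xy}(t; g)`, the lower distribution function. -/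
def PhiLow {X : Type*} [MetricSpace X] (g : X → X) (x y : X) (t : ℝ) : ℝ :=
  liminf (fun k => distCount g x y t k) atTop

/-- `Φ*_{xy}(t; g)`, the upper distribution function. -/
def PhiUp {X : Type*} [MetricSpace X] (g : X → X) (x y : X) (t : ℝ) : ℝ :=
  limsup (fun k => distCount g x y t k) atTop

/-- `S` is distributionally `ε`-scrambled for `g`. -/
def DistScrambled {X : Type*} [MetricSpace X] (g : X → X) (S : Set X) (ε : ℝ) : Prop :=
  ∀ x ∈ S, ∀ y ∈ S, x ≠ y →
    (∀ t : ℝ, 0 < t → PhiUp g x y t = 1) ∧ PhiLow g x y ε = 0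

theorem sum_range_mul_eq_sum_sum_range {M : Type*} [AddCommMonoid M] (g : ℕ → M) (n k : ℕ) :
    ∑ m ∈ Finset.range (n * k), g m =
      ∑ q ∈ Finset.range k, ∑ r ∈ Finset.range n, g (n * q + r) := by
  induction k with
  | zero => simp
  | succ k ih => rw [Nat.mul_succ, Finset.sum_range_add, ih, Finset.sum_range_succ]

section BlockCounting

open Finset

variable {P Q : ℕ → Prop} [DecidablePred P] [DecidablePred Q] {n : ℕ}

theorem mul_card_filter_range_le (h : ∀ q r, P q → r < n → Q (n * q + r)) (k : ℕ) :
    n * #{q ∈ range k | P q} ≤ #{m ∈ range (n * k) | Q m} := by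
  rw [card_filter, card_filter, sum_range_mul_eq_sum_sum_range, mul_sum]
  refine sum_le_sum fun q _ => ?_
  split_ifs with hq
  · calc n * 1 = ∑ r ∈ range n, 1 := by simp
      _ ≤ _ := sum_le_sum fun r hr => by simp [h q r hq (mem_range.1 hr)]
  · simp

theorem card_filter_range_mul_le (h : ∀ q r, r < n → Q (n * q + r) → P q) (k : ℕ) :
    #{m ∈ range (n * k) | Q m} ≤ n * #{q ∈ range k | P q} := by
  rw [card_filter, card_filter, sum_range_mul_eq_sum_sum_range, mul_sum]
  refine sum_le_sum fun q _ => ?_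
  split_ifs with hq
  · calc ∑ r ∈ range n, (if Q (n * q + r) then 1 else 0) ≤ ∑ r ∈ range n, 1 :=
          sum_le_sum fun r _ => by split_ifs <;> simp
      _ = n * 1 := by simp
  · rw [mul_zero, sum_eq_zero fun r hr => if_neg fun hQ => hq (h q r (Finset.mem_range.1 hr) hQ)]

theorem card_filter_range_succ_le (k : ℕ) :
    #{q ∈ range k | P (q + 1)} ≤ #{q ∈ range (k + 1) | P q} := by
  rw [card_filter, card_filter, sum_range_succ']
  exact Nat.le_add_right _ _

end BlockCounting

theorem exists_dist_iterate_lt {X : Type*} [MetricSpace X] [CompactSpace X] {f : X → X}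
    (hf : Continuous f) (n : ℕ) {t : ℝ} (ht : 0 < t) :
    ∃ δ > 0, ∀ a b, dist a b < δ → ∀ j ≤ n, dist (f^[j] a) (f^[j] b) < t := by
  have : UniformEquicontinuous fun j : Fin (n + 1) => f^[j] :=
    uniformEquicontinuous_finite.2 fun j =>
      CompactSpace.uniformContinuous_of_continuous (hf.iterate j)
  obtain ⟨δ, hδ, hδt⟩ := Metric.uniformEquicontinuous_iff.1 this t ht
  exact ⟨δ, hδ, fun a b hab j hj => hδt a b hab ⟨j, Nat.lt_succ_of_le hj⟩⟩

section DistCount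

variable {X : Type*} [MetricSpace X] {f g : X → X} {x y : X} {t : ℝ} {n : ℕ}

theorem distCount_nonneg (k : ℕ) : 0 ≤ distCount g x y t k := by
  unfold distCount; positivity

theorem distCount_le_one (k : ℕ) : distCount g x y t k ≤ 1 := by
  unfold distCount
  refine div_le_one_of_le₀ ?_ (Nat.cast_nonneg k)
  exact_mod_cast (Finset.card_filter_le _ _).trans (Finset.card_range k).le

theorem isBoundedUnder_le_distCount {α : Type*} (l : Filter α) (φ : α → ℕ) :
    l.IsBoundedUnder (· ≤ ·) fun a => distCount g x y t (φ a) :=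
  isBoundedUnder_of ⟨1, fun _ => distCount_le_one _⟩

theorem isBoundedUnder_ge_distCount {α : Type*} (l : Filter α) (φ : α → ℕ) :
    l.IsBoundedUnder (· ≥ ·) fun a => distCount g x y t (φ a) :=
  isBoundedUnder_of ⟨0, fun _ => distCount_nonneg _⟩

theorem isCoboundedUnder_le_distCount {α : Type*} (l : Filter α) [l.NeBot] (φ : α → ℕ) :
    l.IsCoboundedUnder (· ≤ ·) fun a => distCount g x y t (φ a) :=
  isCoboundedUnder_le_of_le l fun _ => distCount_nonneg _

theorem isCoboundedUnder_ge_distCount {α : Type*} (l : Filter α) [l.NeBot] (φ : α → ℕ) :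
    l.IsCoboundedUnder (· ≥ ·) fun a => distCount g x y t (φ a) :=
  isCoboundedUnder_ge_of_le l fun _ => distCount_le_one _

theorem PhiUp_le_one : PhiUp g x y t ≤ 1 :=
  limsup_le_of_le (isCoboundedUnder_le_distCount _ id) (Eventually.of_forall distCount_le_one)

theorem PhiLow_nonneg : 0 ≤ PhiLow g x y t :=
  le_liminf_of_le (isCoboundedUnder_ge_distCount _ id) (Eventually.of_forall distCount_nonneg)

theorem distCount_iterate_le_distCount_mul (hn : 0 < n) {δ : ℝ}
    (hδ : ∀ a b, dist a b < δ → ∀ j < n, dist (f^[j] a) (f^[j] b) < t) (k : ℕ) :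
    distCount (f^[n]) x y δ k ≤ distCount f x y t (n * k) := by
  have hcard := mul_card_filter_range_le (k := k)
    (P := fun q => dist ((f^[n])^[q] x) ((f^[n])^[q] y) < δ)
    (Q := fun m => dist (f^[m] x) (f^[m] y) < t) fun q r hq hr => by
      rw [add_comm, Function.iterate_add_apply, Function.iterate_add_apply, Function.iterate_mul]
      exact hδ _ _ hq r hr
  unfold distCount
  rw [Nat.cast_mul, ← mul_div_mul_left _ (k : ℝ) (Nat.cast_ne_zero.2 hn.ne')]
  gcongr
  exact_mod_cast hcard

theorem distCount_mul_le_two_mul_distCount_iterate (hn : 0 < n) {γ ε : ℝ}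
    (hγ : ∀ a b, dist a b < γ → ∀ j ≤ n, dist (f^[j] a) (f^[j] b) < ε)
    {k : ℕ} (hk : 0 < k) :
    distCount f x y γ (n * k) ≤ 2 * distCount (f^[n]) x y ε (k + 1) := by
  have hcard := card_filter_range_mul_le (n := n) (k := k)
    (P := fun q => dist ((f^[n])^[q + 1] x) ((f^[n])^[q + 1] y) < ε)
    (Q := fun m => dist (f^[m] x) (f^[m] y) < γ) fun q r hr hq => by
      have hnext : n * (q + 1) = (n - r) + (n * q + r) := by rw [Nat.mul_succ]; omega
      rw [← Function.iterate_mul, hnext, Function.iterate_add_apply f (n - r),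
        Function.iterate_add_apply f (n - r)]
      exact hγ _ _ hq _ (Nat.sub_le n r)
  have hshift := card_filter_range_succ_le (k := k)
    (P := fun q => dist ((f^[n])^[q] x) ((f^[n])^[q] y) < ε)
  set A := ((Finset.range (n * k)).filter fun m => dist (f^[m] x) (f^[m] y) < γ).card
  set B := ((Finset.range (k + 1)).filter fun q => dist ((f^[n])^[q] x) ((f^[n])^[q] y) < ε).card
  have hAB : (A : ℝ) ≤ n * B := by exact_mod_cast hcard.trans (Nat.mul_le_mul_left n hshift)
  have hk' : (1 : ℝ) ≤ k := by exact_mod_cast hk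
  unfold distCount
  calc (A : ℝ) / (n * k : ℕ) ≤ (n * B) / (n * k) := by push_cast; gcongr
    _ = B / k := mul_div_mul_left _ _ (Nat.cast_ne_zero.2 hn.ne')
    _ ≤ 2 * (B / (k + 1 : ℕ)) := by
      rw [mul_div_assoc', div_le_div_iff₀ (by positivity) (by positivity)]
      push_cast
      nlinarith [(Nat.cast_nonneg B : (0 : ℝ) ≤ B)]

theorem PhiUp_iterate_le (hn : 0 < n) {δ : ℝ}
    (hδ : ∀ a b, dist a b < δ → ∀ j < n, dist (f^[j] a) (f^[j] b) < t) :
    PhiUp (f^[n]) x y δ ≤ PhiUp f x y t :=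
  calc PhiUp (f^[n]) x y δ ≤ limsup (fun k => distCount f x y t (n * k)) atTop :=
        limsup_le_limsup (Eventually.of_forall (distCount_iterate_le_distCount_mul hn hδ))
          (isCoboundedUnder_le_distCount _ id) (isBoundedUnder_le_distCount _ _)
    _ ≤ PhiUp f x y t :=
        (tendsto_id.const_mul_atTop' hn).limsup_comp_le_limsup
          (isCoboundedUnder_le_distCount _ id) (isBoundedUnder_le_distCount _ id)

theorem PhiLow_le_two_mul_PhiLow_iterate (hn : 0 < n) {γ ε : ℝ}
    (hγ : ∀ a b, dist a b < γ → ∀ j ≤ n, dist (f^[j] a) (f^[j] b) < ε) :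
    PhiLow f x y γ ≤ 2 * PhiLow (f^[n]) x y ε :=
  calc PhiLow f x y γ ≤ liminf (fun k => distCount f x y γ (n * k)) atTop :=
        (tendsto_id.const_mul_atTop' hn).liminf_le_liminf_comp
          (isCoboundedUnder_ge_distCount _ id) (isBoundedUnder_ge_distCount _ id)
    _ ≤ liminf (fun k => 2 * distCount (f^[n]) x y ε (k + 1)) atTop :=
        liminf_le_liminf ((eventually_gt_atTop 0).mono fun _ hk =>
            distCount_mul_le_two_mul_distCount_iterate hn hγ hk)
          (isBoundedUnder_ge_distCount _ _)
          (isCoboundedUnder_ge_of_le atTop fun _ =>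
            mul_le_of_le_one_right zero_le_two (distCount_le_one _))
    _ = 2 * liminf (fun k => distCount (f^[n]) x y ε (k + 1)) atTop :=
        ((monotone_mul_left_of_nonneg zero_le_two).map_liminf_of_continuousAt _
          (continuous_const_mul 2).continuousAt
          (isCoboundedUnder_ge_distCount _ _) (isBoundedUnder_ge_distCount _ _)).symm
    _ = 2 * PhiLow (f^[n]) x y ε := by rw [liminf_nat_add]; rfl

end DistCount

theorem scrambled_for_iterate_implies_scrambled
    {X : Type*} [MetricSpace X] [CompactSpace X]
    (f : X → X) (hf : Continuous f)
    (n : ℕ) (hn : 1 ≤ n) (ε : ℝ) (hε : 0 < ε) :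
    ∃ γ : ℝ, 0 < γ ∧ ∀ S : Set X,
      DistScrambled (f^[n]) S ε → DistScrambled f S γ := by
  obtain ⟨γ, hγ, hγε⟩ := exists_dist_iterate_lt hf n hε
  refine ⟨γ, hγ, fun S hS x hx y hy hxy => ⟨fun t ht => ?_, ?_⟩⟩
  · obtain ⟨δ, hδ, hδt⟩ := exists_dist_iterate_lt hf n ht
    have hup := PhiUp_iterate_le (x := x) (y := y) hn fun a b hab j hj => hδt a b hab j hj.le
    rw [(hS x hx y hy hxy).1 δ hδ] at hup
    exact le_antisymm PhiUp_le_one hup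
  · have hlow := PhiLow_le_two_mul_PhiLow_iterate (x := x) (y := y) hn hγε
    rw [(hS x hx y hy hxy).2, mul_zero] at hlow
    exact le_antisymm hlow PhiLow_nonneg
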